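/- Fix ℓ ∈ [0, 1]. The forward time delay function Δt_f(τ) = τ + γ(τ) − θ(τ) is nonincreasing on the interval [π/2, π], and Δt_f(π) = 0. -/

import Mathlib

open Real

/-!
Reflecting `τ ↦ π - τ` turns `Δt_f` on `(π/2, π]` into `H(s) = γ(s) + θ(s) - s` on `[0, π/2)`.
With `t = tan s`, `c = √(1 + ℓ²t²)` and `L = √(1 - ℓ²)` one finds
`H'(s) = (L c - (1 - ℓ)(1 - ℓ t²)) / c²`, and `(L c)² = (1 - ℓ²)(1 + ℓ²t²) ≥ (1 - ℓ)² ≥ ((1 - ℓ)(1 - ℓt²))²`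
whenever `1 - ℓt² > 0`, so `H` is nondecreasing. The value `γ(π/2)` at `τ = π/2` dominates every
`H(s)`, since `arctan (ℓ t) ≤ s` and `L t / c ≤ L / ℓ`. Finally `Δt_f(π) = H(0) = 0`.
-/

/-- Tortoise coordinate `γ(τ)` along the null geodesic of angular momentum `ℓ`:
`γ(τ) = arctan(√(1−ℓ²)·tan τ / √(1+ℓ²·tan²τ))` for `τ ∈ [0, π/2)`, with
`γ(π/2) = arctan(√(1−ℓ²)/ℓ)` if `ℓ > 0` and `π/2` if `ℓ = 0`, and
`γ(τ) = γ(π − τ)` for `τ ∈ (π/2, π]`. -/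
noncomputable def tortoiseGamma (l τ : ℝ) : ℝ :=
  if τ < π / 2 then
    Real.arctan (Real.sqrt (1 - l ^ 2) * Real.tan τ /
      Real.sqrt (1 + l ^ 2 * Real.tan τ ^ 2))
  else if τ = π / 2 then
    (if 0 < l then Real.arctan (Real.sqrt (1 - l ^ 2) / l) else π / 2)
  else
    Real.arctan (Real.sqrt (1 - l ^ 2) * Real.tan (π - τ) /
      Real.sqrt (1 + l ^ 2 * Real.tan (π - τ) ^ 2))

/-- Boundary angle `θ(τ)` along the null geodesic of angular momentum `ℓ`:
`θ(τ) = arctan(ℓ·tan τ)` for `τ ∈ [0, π/2)`, `θ(π/2) = π/2`, and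
`θ(τ) = π − θ(π − τ)` for `τ ∈ (π/2, π]`. -/
noncomputable def boundaryTheta (l τ : ℝ) : ℝ :=
  if τ < π / 2 then Real.arctan (l * Real.tan τ)
  else if τ = π / 2 then π / 2
  else π - Real.arctan (l * Real.tan (π - τ))

lemma Real.hasDerivAt_tan_of_cos_ne_zero {x : ℝ} (hx : cos x ≠ 0) :
    HasDerivAt tan (1 + tan x ^ 2) x := by
  simpa only [one_div, ← inv_one_add_tan_sq hx, inv_inv] using hasDerivAt_tan hx

lemma Real.hasDerivAt_arctan_mul_tan (l : ℝ) {x : ℝ} (hx : cos x ≠ 0) :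
    HasDerivAt (fun s => arctan (l * tan s))
      (l * (1 + tan x ^ 2) / (1 + l ^ 2 * tan x ^ 2)) x := by
  refine ((hasDerivAt_tan_of_cos_ne_zero hx).const_mul l).arctan.congr_deriv ?_
  ring

/-- As `L² + l² = 1`, `1 + (L t / √(1 + l² t²))² = (1 + t²) / (1 + l² t²)` cancels the factor
`1 + t²` of `tan'`. -/
lemma Real.hasDerivAt_arctan_mul_tan_div_sqrt {L l x : ℝ} (hLl : L ^ 2 + l ^ 2 = 1)
    (hx : cos x ≠ 0) :
    HasDerivAt (fun s => arctan (L * tan s / √(1 + l ^ 2 * tan s ^ 2)))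
      (L / √(1 + l ^ 2 * tan x ^ 2)) x := by
  have hq : 0 < 1 + l ^ 2 * tan x ^ 2 := by positivity
  have hc0 : 0 < √(1 + l ^ 2 * tan x ^ 2) := sqrt_pos.2 hq
  have htan := hasDerivAt_tan_of_cos_ne_zero hx
  have hsqrt := (((htan.fun_pow 2).const_mul (l ^ 2)).const_add 1).sqrt hq.ne'
  refine ((htan.const_mul L).fun_div hsqrt hc0.ne').arctan.congr_deriv ?_
  simp only [Nat.cast_ofNat, pow_one, Nat.add_one_sub_one]
  field_simp
  rw [sq_sqrt (by positivity)]
  linear_combination -(L * tan x ^ 2 * hLl)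

noncomputable def reducedDelay (l s : ℝ) : ℝ :=
  arctan (√(1 - l ^ 2) * tan s / √(1 + l ^ 2 * tan s ^ 2)) + arctan (l * tan s) - s

lemma hasDerivAt_reducedDelay {l x : ℝ} (hl : l ^ 2 ≤ 1) (hx : cos x ≠ 0) :
    HasDerivAt (reducedDelay l)
      (√(1 - l ^ 2) / √(1 + l ^ 2 * tan x ^ 2)
        + l * (1 + tan x ^ 2) / (1 + l ^ 2 * tan x ^ 2) - 1) x :=
  ((hasDerivAt_arctan_mul_tan_div_sqrt (by rw [sq_sqrt (by linarith)]; ring) hx).add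
    (hasDerivAt_arctan_mul_tan l hx)).sub (hasDerivAt_id x)

lemma one_sub_mul_one_sub_le_sqrt_mul_sqrt {l : ℝ} (hl₀ : 0 ≤ l) (hl₁ : l ≤ 1) (t : ℝ) :
    (1 - l) * (1 - l * t ^ 2) ≤ √(1 - l ^ 2) * √(1 + l ^ 2 * t ^ 2) := by
  rcases le_or_gt (1 - l * t ^ 2) 0 with h | h
  · nlinarith [mul_nonneg (sqrt_nonneg (1 - l ^ 2)) (sqrt_nonneg (1 + l ^ 2 * t ^ 2))]
  rw [← sqrt_mul (by nlinarith)]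
  apply le_sqrt_of_sq_le
  have hsq : (1 - l * t ^ 2) ^ 2 ≤ 1 := by nlinarith [mul_nonneg hl₀ (sq_nonneg t)]
  calc ((1 - l) * (1 - l * t ^ 2)) ^ 2 = (1 - l) ^ 2 * (1 - l * t ^ 2) ^ 2 := by ring
    _ ≤ (1 - l) ^ 2 := mul_le_of_le_one_right (sq_nonneg _) hsq
    _ ≤ (1 - l ^ 2) * (1 + l ^ 2 * t ^ 2) := by
        nlinarith [mul_nonneg (mul_nonneg (sub_nonneg.2 hl₁) hl₀) (sq_nonneg (l * t))]

lemma reducedDelay_deriv_nonneg {l : ℝ} (hl₀ : 0 ≤ l) (hl₁ : l ≤ 1) (t : ℝ) :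
    0 ≤ √(1 - l ^ 2) / √(1 + l ^ 2 * t ^ 2) + l * (1 + t ^ 2) / (1 + l ^ 2 * t ^ 2) - 1 := by
  have hq : 0 < 1 + l ^ 2 * t ^ 2 := by positivity
  have hc0 : 0 < √(1 + l ^ 2 * t ^ 2) := sqrt_pos.2 hq
  have hc : √(1 + l ^ 2 * t ^ 2) ^ 2 = 1 + l ^ 2 * t ^ 2 := sq_sqrt hq.le
  have expand : √(1 - l ^ 2) / √(1 + l ^ 2 * t ^ 2) + l * (1 + t ^ 2) / (1 + l ^ 2 * t ^ 2) - 1 =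
      (√(1 - l ^ 2) * √(1 + l ^ 2 * t ^ 2) - (1 - l) * (1 - l * t ^ 2)) / (1 + l ^ 2 * t ^ 2) := by
    set c := √(1 + l ^ 2 * t ^ 2)
    rw [← hc]
    field_simp
    linear_combination -hc
  rw [expand]
  exact div_nonneg (sub_nonneg.2 (one_sub_mul_one_sub_le_sqrt_mul_sqrt hl₀ hl₁ t)) hq.le

lemma reducedDelay_monotoneOn {l : ℝ} (hl₀ : 0 ≤ l) (hl₁ : l ≤ 1) :
    MonotoneOn (reducedDelay l) (Set.Ioo (-(π / 2)) (π / 2)) := by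
  have hcos : ∀ x ∈ Set.Ioo (-(π / 2)) (π / 2), cos x ≠ 0 := fun x hx =>
    (cos_pos_of_mem_Ioo hx).ne'
  have hl : l ^ 2 ≤ 1 := by nlinarith
  refine monotoneOn_of_hasDerivWithinAt_nonneg (convex_Ioo _ _)
    (fun x hx => (hasDerivAt_reducedDelay hl (hcos x hx)).continuousAt.continuousWithinAt)
    (fun x hx => ?_) (fun x _ => reducedDelay_deriv_nonneg hl₀ hl₁ (tan x))
  rw [interior_Ioo] at hx
  exact (hasDerivAt_reducedDelay hl (hcos x hx)).hasDerivWithinAt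

lemma reducedDelay_le_tortoiseGamma_pi_div_two {l s : ℝ} (hl : l ≤ 1) (hs₀ : 0 ≤ s)
    (hs : s < π / 2) : reducedDelay l s ≤ tortoiseGamma l (π / 2) := by
  have ht : 0 ≤ tan s := tan_nonneg_of_nonneg_of_le_pi_div_two hs₀ hs.le
  have hθ : arctan (l * tan s) ≤ s :=
    calc arctan (l * tan s) ≤ arctan (tan s) :=
          arctan_strictMono.monotone (mul_le_of_le_one_left ht hl)
      _ = s := arctan_tan (by linarith [pi_pos]) hs
  have hγ : arctan (√(1 - l ^ 2) * tan s / √(1 + l ^ 2 * tan s ^ 2)) ≤ tortoiseGamma l (π / 2) := by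
    rw [tortoiseGamma, if_neg (lt_irrefl _), if_pos rfl]
    split_ifs with hl₀
    · have hc0 : 0 < √(1 + l ^ 2 * tan s ^ 2) := sqrt_pos.2 (by positivity)
      have hlt : l * tan s ≤ √(1 + l ^ 2 * tan s ^ 2) := le_sqrt_of_sq_le (by nlinarith)
      refine arctan_strictMono.monotone ?_
      rw [div_le_div_iff₀ hc0 hl₀]
      nlinarith [mul_le_mul_of_nonneg_left hlt (sqrt_nonneg (1 - l ^ 2))]
    · exact (arctan_lt_pi_div_two _).le
  rw [reducedDelay]
  linarith

lemma reducedDelay_zero (l : ℝ) : reducedDelay l 0 = 0 := by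
  simp [reducedDelay]

lemma forwardDelay_eq_reducedDelay (l : ℝ) {τ : ℝ} (hτ : π / 2 < τ) :
    τ + tortoiseGamma l τ - boundaryTheta l τ = reducedDelay l (π - τ) := by
  rw [tortoiseGamma, boundaryTheta, reducedDelay, if_neg hτ.not_gt, if_neg hτ.not_gt,
    if_neg hτ.ne', if_neg hτ.ne']
  ring

lemma forwardDelay_pi_div_two (l : ℝ) :
    π / 2 + tortoiseGamma l (π / 2) - boundaryTheta l (π / 2) = tortoiseGamma l (π / 2) := by
  rw [boundaryTheta, if_neg (lt_irrefl _), if_pos rfl]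
  ring

/-- The forward time delay `Δt_f(τ) = τ + γ(τ) − θ(τ)` is nonincreasing on `[π/2, π]`,
and `Δt_f(π) = 0`. -/
theorem forward_delay_antitone (l : ℝ) (hl : l ∈ Set.Icc (0 : ℝ) 1) :
    AntitoneOn (fun τ => τ + tortoiseGamma l τ - boundaryTheta l τ)
      (Set.Icc (π / 2) π) ∧
    π + tortoiseGamma l π - boundaryTheta l π = 0 := by
  obtain ⟨hl₀, hl₁⟩ := hl
  have hπ := pi_pos
  refine ⟨fun a ha b hb hab => ?_, ?_⟩
  · dsimp only
    rcases hb.1.eq_or_lt with rfl | hb'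
    · rw [le_antisymm hab ha.1]
    rw [forwardDelay_eq_reducedDelay l hb']
    rcases ha.1.eq_or_lt with rfl | ha'
    · rw [forwardDelay_pi_div_two]
      exact reducedDelay_le_tortoiseGamma_pi_div_two hl₁ (by linarith [hb.2]) (by linarith)
    · rw [forwardDelay_eq_reducedDelay l ha']
      exact reducedDelay_monotoneOn hl₀ hl₁ ⟨by linarith [hb.2], by linarith⟩
        ⟨by linarith [ha.2], by linarith⟩ (by linarith)
  · rw [forwardDelay_eq_reducedDelay l (by linarith), sub_self, reducedDelay_zero]
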